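/- There exists a bounded positive measure ν on [0,1] (a Cantor-type measure with total mass 2^{3/2}) such that the averaging operator A_{1/2}(ν), defined via ball averages of ν with α = 1/2 in dimension D = 1, is in L^{1,∞}(ℝ) but not in L^{1,q}(ℝ) for any q < ∞. Concretely: with S_k = { Σ_{j=1}^k a_j 4^{-j} : a_j ∈ {0,2} }, f_k = 2^{3/2}·2^k·1_{A_k} where A_k = ∪_{x∈S_k}[x, x+4^{-k}), the functions f_k are uniformly bounded in L¹(ℝ) yet |{ A_{1/2}(f_j) ≥ 2^{-1/2}·2^k }| ≥ 2^{-k} for all k ≤ j, so sup_j ‖A_{1/2}(f_j)‖_{L^{1,q}(ℝ)} = ∞ for every q < ∞. -/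

import Mathlib

open MeasureTheory Metric ENNReal

noncomputable def ballAvg1 (f : ℝ → ℝ≥0∞) (ρ x : ℝ) : ℝ≥0∞ :=
  (∫⁻ y in Metric.ball x ρ, f y) / volume (Metric.ball x ρ)

noncomputable def scaleOp1 (α : ℝ) (f : ℝ → ℝ≥0∞) (x : ℝ) : ℝ≥0∞ :=
  sInf {s : ℝ≥0∞ | ∃ ρ : ℝ, 0 < ρ ∧ s = ENNReal.ofReal ρ ∧
    ENNReal.ofReal ρ ^ (-α) < ballAvg1 f ρ x}

noncomputable def avgOp1 (α : ℝ) (f : ℝ → ℝ≥0∞) (x : ℝ) : ℝ≥0∞ :=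
  scaleOp1 α f x ^ (-α)

/-- `S_k`: fractions whose base-4 expansion up to digit `k` uses only digits 0 and 2. -/
def cantorS (k : ℕ) : Set ℝ :=
  {x : ℝ | ∃ a : ℕ → ℝ, (∀ j, a j = 0 ∨ a j = 2) ∧
    x = ∑ j ∈ Finset.range k, a j * (4 : ℝ) ^ (-(j : ℤ) - 1)}

/-- `A_k = ∪_{x ∈ S_k} [x, x + 4^{-k})`. -/
def cantorA (k : ℕ) : Set ℝ :=
  ⋃ x ∈ cantorS k, Set.Ico x (x + (4 : ℝ) ^ (-(k : ℤ)))

/-- `f_j = 2^{3/2} · 2^j · 1_{A_j}`. -/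
noncomputable def cantorF (j : ℕ) : ℝ → ℝ≥0∞ :=
  (cantorA j).indicator fun _ => ENNReal.ofReal ((2 : ℝ) ^ ((3 : ℝ) / 2) * 2 ^ j)

/-- The Lorentz `L^{1,q}` quasinorm on `ℝ`. -/
noncomputable def L1qNorm (q : ℝ) (h : ℝ → ℝ≥0∞) : ℝ≥0∞ :=
  (∫⁻ l in Set.Ioi (0 : ℝ),
    (volume {x : ℝ | ENNReal.ofReal l < h x}) ^ q * ENNReal.ofReal (l ^ (q - 1))) ^ (1 / q)

/-!
`A_k` is a union of `2^k` intervals of length `4^{-k}`, so `∫ f_j = 2^{3/2}`. For `j ≥ k`, the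
first subinterval `[p, p + 4^{-k})` of an interval of `A_{k-1}` carries the mass `2^{3/2}·2^{-k}`
of `f_j`, by self-similarity. A ball of radius `ρ = 2·4^{-k}` centred in `(p, p + 2·4^{-k})`
covers it and a bit of the next interval of `A_j`, so its average exceeds `ρ^{-1/2}`, and
`A_{1/2}(f_j) ≥ ρ^{-1/2} = 2^{-1/2}·2^k` on a set of measure `2^{-k}`. Each of the heights
`2^{-1/2}·2^k`, `k ≤ j`, then contributes the same amount to `‖A_{1/2}(f_j)‖_{L^{1,q}}^q`, which
therefore grows linearly in `j`.
-/

lemma four_zpow_neg (k : ℕ) : (4 : ℝ) ^ (-(k : ℤ)) = ((2 : ℝ) ^ k * 2 ^ k)⁻¹ := by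
  rw [zpow_neg, zpow_natCast, ← mul_pow]
  norm_num

lemma four_zpow_neg_succ (k : ℕ) : (4 : ℝ) ^ (-((k + 1 : ℕ) : ℤ)) = (4 : ℝ) ^ (-(k : ℤ)) / 4 := by
  simp only [four_zpow_neg, pow_succ]
  field_simp
  ring

lemma cantorS_zero : cantorS 0 = {0} := by
  ext x
  simpa [cantorS] using fun _ => ⟨fun _ => 0, fun _ => Or.inl rfl⟩

lemma mem_cantorS_succ_iff {m : ℕ} {x : ℝ} :
    x ∈ cantorS (m + 1) ↔ 4 * x ∈ cantorS m ∨ 4 * x - 2 ∈ cantorS m := by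
  have shift : ∀ a : ℕ → ℝ,
      ∑ j ∈ Finset.range (m + 1), a j * (4 : ℝ) ^ (-(j : ℤ) - 1) =
        (a 0 + ∑ j ∈ Finset.range m, a (j + 1) * (4 : ℝ) ^ (-(j : ℤ) - 1)) / 4 := by
    intro a
    rw [Finset.sum_range_succ', add_comm, add_div, Finset.sum_div]
    congr 1
    · norm_num; ring
    · refine Finset.sum_congr rfl fun j _ => ?_
      rw [show -((j + 1 : ℕ) : ℤ) - 1 = (-(j : ℤ) - 1) + (-1) by push_cast; ring,
        zpow_add₀ (by norm_num : (4 : ℝ) ≠ 0)]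
      norm_num
      ring
  constructor
  · rintro ⟨a, ha, rfl⟩
    rw [shift]
    rcases ha 0 with h0 | h0
    · exact Or.inl ⟨fun j => a (j + 1), fun j => ha (j + 1), by rw [h0]; ring⟩
    · exact Or.inr ⟨fun j => a (j + 1), fun j => ha (j + 1), by rw [h0]; ring⟩
  · have prepend : ∀ d : ℝ, (d = 0 ∨ d = 2) → 4 * x - d ∈ cantorS m → x ∈ cantorS (m + 1) := by
      rintro d hd ⟨b, hb, hx⟩
      refine ⟨fun n => Nat.casesOn n d b, fun n => by cases n <;> simp [hd, hb], ?_⟩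
      rw [shift]
      change x = (d + _) / 4
      linarith
    rintro (h | h)
    · exact prepend 0 (Or.inl rfl) (by simpa using h)
    · exact prepend 2 (Or.inr rfl) h

lemma zero_mem_cantorS (m : ℕ) : (0 : ℝ) ∈ cantorS m :=
  ⟨fun _ => 0, fun _ => Or.inl rfl, by simp⟩

lemma half_mem_cantorS_one : (1 / 2 : ℝ) ∈ cantorS 1 :=
  ⟨fun _ => 2, fun _ => Or.inr rfl, by norm_num⟩

lemma cantorS_finite (m : ℕ) : (cantorS m).Finite := by
  induction m with
  | zero => simp [cantorS_zero]
  | succ m ih =>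
    refine ((ih.image (· / 4)).union (ih.image fun y => (y + 2) / 4)).subset fun x hx => ?_
    rcases mem_cantorS_succ_iff.1 hx with h | h
    · exact Or.inl ⟨4 * x, h, by ring⟩
    · exact Or.inr ⟨4 * x - 2, h, by ring⟩

lemma nonneg_and_add_le_one_of_mem_cantorS {m : ℕ} {x : ℝ} (hx : x ∈ cantorS m) :
    0 ≤ x ∧ x + (4 : ℝ) ^ (-(m : ℤ)) ≤ 1 := by
  induction m generalizing x with
  | zero => rw [cantorS_zero] at hx; subst hx; norm_num
  | succ m ih =>
    rw [four_zpow_neg_succ]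
    rcases mem_cantorS_succ_iff.1 hx with h | h <;>
      exact ⟨by linarith [(ih h).1], by linarith [(ih h).2]⟩

lemma add_mul_mem_cantorS {k m : ℕ} {p r : ℝ} (hp : p ∈ cantorS k) (hr : r ∈ cantorS m) :
    p + (4 : ℝ) ^ (-(k : ℤ)) * r ∈ cantorS (k + m) := by
  induction k generalizing p with
  | zero => rw [cantorS_zero] at hp; subst hp; simpa using hr
  | succ k ih =>
    rw [Nat.add_right_comm, mem_cantorS_succ_iff, four_zpow_neg_succ]
    rcases mem_cantorS_succ_iff.1 hp with h | h
    · left; convert ih h using 1; ring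
    · right; convert ih h using 1; ring

lemma cantorS_mono {k j : ℕ} (h : k ≤ j) : cantorS k ⊆ cantorS j := fun p hp => by
  simpa [Nat.add_sub_cancel' h] using add_mul_mem_cantorS hp (zero_mem_cantorS (j - k))

def cantorIco (m : ℕ) (l : ℝ) : Set ℝ := ⋃ p ∈ cantorS m, Set.Ico p (p + l)

lemma cantorA_eq_cantorIco (k : ℕ) : cantorA k = cantorIco k ((4 : ℝ) ^ (-(k : ℤ))) := rfl

lemma cantorIco_zero (l : ℝ) : cantorIco 0 l = Set.Ico 0 l := by
  simp [cantorIco, cantorS_zero]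

lemma cantorIco_succ (m : ℕ) (l : ℝ) :
    cantorIco (m + 1) l =
      (4 * ·) ⁻¹' cantorIco m (4 * l) ∪ (4 * · - 2) ⁻¹' cantorIco m (4 * l) := by
  ext x
  simp only [cantorIco, Set.mem_iUnion, Set.mem_Ico, Set.mem_union, Set.mem_preimage,
    exists_prop]
  constructor
  · rintro ⟨s, hs, h1, h2⟩
    rcases mem_cantorS_succ_iff.1 hs with h | h
    · exact Or.inl ⟨4 * s, h, by constructor <;> linarith⟩
    · exact Or.inr ⟨4 * s - 2, h, by constructor <;> linarith⟩
  · rintro (⟨r, hr, h1, h2⟩ | ⟨r, hr, h1, h2⟩)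
    · refine ⟨r / 4, mem_cantorS_succ_iff.2 (Or.inl ?_), by linarith, by linarith⟩
      rwa [mul_div_cancel₀ r four_ne_zero]
    · refine ⟨(r + 2) / 4, mem_cantorS_succ_iff.2 (Or.inr ?_), by linarith, by linarith⟩
      rwa [mul_div_cancel₀ _ four_ne_zero, add_sub_cancel_right]

lemma measurableSet_cantorIco (m : ℕ) (l : ℝ) : MeasurableSet (cantorIco m l) := by
  induction m generalizing l with
  | zero => rw [cantorIco_zero]; exact measurableSet_Ico
  | succ m ih =>
    rw [cantorIco_succ]
    exact ((ih _).preimage (by fun_prop)).union ((ih _).preimage (by fun_prop))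

lemma measurableSet_cantorA (k : ℕ) : MeasurableSet (cantorA k) :=
  measurableSet_cantorIco _ _

lemma cantorIco_subset_Ico {m : ℕ} {l : ℝ} (hl : l ≤ (4 : ℝ) ^ (-(m : ℤ))) :
    cantorIco m l ⊆ Set.Ico 0 1 := by
  simp only [cantorIco, Set.iUnion_subset_iff]
  intro p hp x hx
  obtain ⟨h0, h1⟩ := nonneg_and_add_le_one_of_mem_cantorS hp
  exact ⟨h0.trans hx.1, by linarith [hx.2]⟩

/-- The two halves of `cantorIco (m + 1) l` are disjoint copies of `cantorIco m (4 * l)` scaled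
by `1 / 4`, so the measure doubles with every step of the construction. -/
lemma volume_cantorIco {m : ℕ} {l : ℝ} (h0 : 0 ≤ l) (h1 : (4 : ℝ) ^ m * l ≤ 1) :
    volume (cantorIco m l) = ENNReal.ofReal ((2 : ℝ) ^ m * l) := by
  induction m generalizing l with
  | zero => simp [cantorIco_zero]
  | succ m ih =>
    have h4l : (4 : ℝ) ^ m * (4 * l) ≤ 1 := by rw [pow_succ] at h1; linarith
    have hsub : cantorIco m (4 * l) ⊆ Set.Ico 0 1 := by
      refine cantorIco_subset_Ico ?_
      rw [zpow_neg, zpow_natCast, ← one_div, le_div_iff₀ (by positivity)]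
      linarith
    have hdisj : Disjoint ((4 * ·) ⁻¹' cantorIco m (4 * l))
        ((4 * · - 2) ⁻¹' cantorIco m (4 * l)) :=
      Set.disjoint_left.2 fun x hx hx' => by
        linarith [(hsub hx).2, (hsub hx').1]
    have hshift : (4 * · - 2) ⁻¹' cantorIco m (4 * l) =
        (4 * ·) ⁻¹' ((· + -2) ⁻¹' cantorIco m (4 * l)) := by
      ext x; simp [sub_eq_add_neg]
    rw [cantorIco_succ, measure_union hdisj ((measurableSet_cantorIco _ _).preimage (by fun_prop)),
      hshift, Real.volume_preimage_mul_left four_ne_zero,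
      Real.volume_preimage_mul_left four_ne_zero,
      measure_preimage_add_right, ih (by linarith) h4l, ← ENNReal.ofReal_mul (by norm_num),
      ← ENNReal.ofReal_add (by positivity) (by positivity)]
    congr 1
    norm_num
    ring

lemma volume_cantorA (k : ℕ) : volume (cantorA k) = ENNReal.ofReal ((2 : ℝ) ^ k)⁻¹ := by
  rw [cantorA_eq_cantorIco, volume_cantorIco (by positivity) (by simp),
    four_zpow_neg]
  congr 1
  field_simp

lemma lintegral_cantorF (j : ℕ) :
    ∫⁻ x, cantorF j x = ENNReal.ofReal ((2 : ℝ) ^ ((3 : ℝ) / 2)) := by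
  rw [cantorF, lintegral_indicator (measurableSet_cantorA j), setLIntegral_const, volume_cantorA,
    ← ENNReal.ofReal_mul (by positivity)]
  congr 1
  field_simp

/-- Self-similarity: `A_{k+m}` contains the copy of `A_m` scaled into each interval of `A_k`. -/
lemma volume_cantorA_inter_Ico_ge {k m : ℕ} {p : ℝ} (hp : p ∈ cantorS k) :
    ENNReal.ofReal ((4 : ℝ) ^ (-(k : ℤ)) * ((2 : ℝ) ^ m)⁻¹) ≤
      volume (cantorA (k + m) ∩ Set.Ico p (p + (4 : ℝ) ^ (-(k : ℤ)))) := by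
  set ε := (4 : ℝ) ^ (-(k : ℤ))
  have hε : 0 < ε := by positivity
  have hsub : (fun y => (y - p) * ε⁻¹) ⁻¹' cantorA m ⊆
      cantorA (k + m) ∩ Set.Ico p (p + ε) := by
    intro y hy
    simp only [Set.mem_preimage, cantorA, Set.mem_iUnion, Set.mem_Ico, exists_prop,
      ← div_eq_mul_inv, le_div_iff₀ hε, div_lt_iff₀ hε] at hy
    obtain ⟨r, hr, h1, h2⟩ := hy
    obtain ⟨hr0, hr1⟩ := nonneg_and_add_le_one_of_mem_cantorS hr
    have hε' : (4 : ℝ) ^ (-((k + m : ℕ) : ℤ)) = ε * (4 : ℝ) ^ (-(m : ℤ)) := by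
      rw [Nat.cast_add, neg_add, zpow_add₀ four_ne_zero]
    refine ⟨Set.mem_biUnion (add_mul_mem_cantorS hp hr) ⟨by linarith, by linarith⟩,
      by nlinarith, by nlinarith⟩
  have hpre : (fun y => (y - p) * ε⁻¹) ⁻¹' cantorA m =
      (· + -p) ⁻¹' ((· * ε⁻¹) ⁻¹' cantorA m) := by
    ext y; simp [sub_eq_add_neg]
  calc ENNReal.ofReal (ε * ((2 : ℝ) ^ m)⁻¹)
      = volume ((fun y => (y - p) * ε⁻¹) ⁻¹' cantorA m) := by
        rw [hpre, measure_preimage_add_right, Real.volume_preimage_mul_right (inv_ne_zero hε.ne'),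
          volume_cantorA, inv_inv, abs_of_pos hε, ENNReal.ofReal_mul hε.le]
    _ ≤ _ := measure_mono hsub

lemma volume_cantorA_inter_ball_gt {K m : ℕ} {p x : ℝ} (hp : p ∈ cantorS K) (hpx : p < x)
    (hxp : x < p + 2 * (4 : ℝ) ^ (-((K + 1 : ℕ) : ℤ))) :
    ENNReal.ofReal ((4 : ℝ) ^ (-((K + 1 : ℕ) : ℤ)) * ((2 : ℝ) ^ m)⁻¹) <
      volume (cantorA (K + 1 + m) ∩ ball x (2 * (4 : ℝ) ^ (-((K + 1 : ℕ) : ℤ)))) := by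
  set ε := (4 : ℝ) ^ (-((K + 1 : ℕ) : ℤ))
  set j := K + 1 + m
  -- The ball also meets the next interval of `A_{K+1}`, which starts at `p + 2ε`.
  have hq : p + 2 * ε ∈ cantorS j := by
    refine cantorS_mono (Nat.le_add_right _ m) ?_
    convert add_mul_mem_cantorS hp half_mem_cantorS_one using 1
    rw [show ε = _ from four_zpow_neg_succ K]
    ring
  set δ := min ((4 : ℝ) ^ (-(j : ℤ))) (x - p)
  have hδ : 0 < δ := lt_min (by positivity) (by linarith)
  have hδj : δ ≤ (4 : ℝ) ^ (-(j : ℤ)) := min_le_left _ _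
  have hδx : δ ≤ x - p := min_le_right _ _
  have hε : 0 < ε := by positivity
  have hsub : cantorA j ∩ Set.Ico p (p + ε) ∪ Set.Ico (p + 2 * ε) (p + 2 * ε + δ) ⊆
      cantorA j ∩ ball x (2 * ε) := by
    rw [Real.ball_eq_Ioo]
    rintro y (⟨hA, hy⟩ | hy) <;> simp only [Set.mem_Ico] at hy
    · exact ⟨hA, by constructor <;> linarith⟩
    · exact ⟨Set.mem_biUnion hq ⟨hy.1, by linarith⟩, by constructor <;> linarith⟩
  have hdisj : Disjoint (cantorA j ∩ Set.Ico p (p + ε)) (Set.Ico (p + 2 * ε) (p + 2 * ε + δ)) :=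
    Set.disjoint_left.2 fun y hy hy' => by linarith [hy.2.2, hy'.1]
  calc ENNReal.ofReal (ε * ((2 : ℝ) ^ m)⁻¹)
      < ENNReal.ofReal (ε * ((2 : ℝ) ^ m)⁻¹) + ENNReal.ofReal δ :=
        ENNReal.lt_add_right ENNReal.ofReal_ne_top (by simpa using hδ)
    _ ≤ volume (cantorA j ∩ Set.Ico p (p + ε)) + volume (Set.Ico (p + 2 * ε) (p + 2 * ε + δ)) :=
        add_le_add (volume_cantorA_inter_Ico_ge (cantorS_mono K.le_succ hp)) (by simp)
    _ = volume (cantorA j ∩ Set.Ico p (p + ε) ∪ Set.Ico (p + 2 * ε) (p + 2 * ε + δ)) :=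
        (measure_union hdisj measurableSet_Ico).symm
    _ ≤ _ := measure_mono hsub

lemma two_mul_four_zpow_rpow_neg_half (k : ℕ) :
    (2 * (4 : ℝ) ^ (-(k : ℤ))) ^ (-(1 / 2) : ℝ) = (2 : ℝ) ^ (-(1 : ℝ) / 2) * 2 ^ k := by
  have h4 : (4 : ℝ) ^ (-(k : ℤ)) = ((2 : ℝ) ^ k) ^ (-2 : ℝ) := by
    rw [Real.rpow_neg (by positivity), four_zpow_neg, ← sq]
    norm_cast
  rw [h4, Real.mul_rpow (by norm_num) (by positivity), ← Real.rpow_mul (by positivity)]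
  norm_num

lemma ballAvg1_cantorF (j : ℕ) (ρ x : ℝ) :
    ballAvg1 (cantorF j) ρ x = ENNReal.ofReal ((2 : ℝ) ^ ((3 : ℝ) / 2) * 2 ^ j) *
      volume (cantorA j ∩ ball x ρ) / volume (ball x ρ) := by
  rw [ballAvg1, cantorF, lintegral_indicator (measurableSet_cantorA j), setLIntegral_const,
    Measure.restrict_apply (measurableSet_cantorA j)]

/-- The mass of `f_j` on `[p, p + 4^{-k})` alone gives the average exactly `ρ^{-1/2}`,
`ρ = 2·4^{-k}`; the piece of the next interval of `A_j` inside the ball makes it strict. -/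
lemma rpow_neg_half_lt_ballAvg1_cantorF {K m : ℕ} {p x : ℝ} (hp : p ∈ cantorS K) (hpx : p < x)
    (hxp : x < p + 2 * (4 : ℝ) ^ (-((K + 1 : ℕ) : ℤ))) :
    ENNReal.ofReal (2 * (4 : ℝ) ^ (-((K + 1 : ℕ) : ℤ))) ^ (-(1 / 2) : ℝ) <
      ballAvg1 (cantorF (K + 1 + m)) (2 * (4 : ℝ) ^ (-((K + 1 : ℕ) : ℤ))) x := by
  set ε := (4 : ℝ) ^ (-((K + 1 : ℕ) : ℤ))
  have hε : 0 < ε := by positivity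
  have hmass : (2 * ε) ^ (-(1 / 2) : ℝ) * (2 * (2 * ε)) =
      (2 : ℝ) ^ ((3 : ℝ) / 2) * 2 ^ (K + 1 + m) * (ε * ((2 : ℝ) ^ m)⁻¹) := by
    have h32 : (2 : ℝ) ^ ((3 : ℝ) / 2) = (2 : ℝ) ^ (-(1 : ℝ) / 2) * 4 := by
      rw [show (3 : ℝ) / 2 = -(1 : ℝ) / 2 + 2 by norm_num, Real.rpow_add two_pos]
      norm_num
    rw [two_mul_four_zpow_rpow_neg_half, h32, pow_add]
    field_simp
    ring
  rw [ballAvg1_cantorF, Real.volume_ball, ENNReal.lt_div_iff_mul_lt (by simp [hε])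
    (Or.inl ENNReal.ofReal_ne_top), ENNReal.ofReal_rpow_of_pos (by positivity),
    ← ENNReal.ofReal_mul (by positivity), hmass, ENNReal.ofReal_mul (by positivity)]
  exact ENNReal.mul_lt_mul_right (by simp [ENNReal.ofReal_eq_zero]; positivity)
    ENNReal.ofReal_ne_top (volume_cantorA_inter_ball_gt hp hpx hxp)

lemma le_avgOp1_of_lt_ballAvg1 {α ρ x : ℝ} {f : ℝ → ℝ≥0∞} (hα : 0 ≤ α) (hρ : 0 < ρ)
    (h : ENNReal.ofReal ρ ^ (-α) < ballAvg1 f ρ x) :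
    ENNReal.ofReal ρ ^ (-α) ≤ avgOp1 α f x := by
  rw [avgOp1, ENNReal.rpow_neg, ENNReal.rpow_neg]
  exact ENNReal.inv_le_inv.2 (ENNReal.rpow_le_rpow (sInf_le ⟨ρ, hρ, rfl, h⟩) hα)

lemma le_avgOp1_cantorF {K m : ℕ} {p x : ℝ} (hp : p ∈ cantorS K) (hpx : p < x)
    (hxp : x < p + 2 * (4 : ℝ) ^ (-((K + 1 : ℕ) : ℤ))) :
    ENNReal.ofReal ((2 : ℝ) ^ (-(1 : ℝ) / 2) * 2 ^ (K + 1)) ≤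
      avgOp1 (1 / 2) (cantorF (K + 1 + m)) x := by
  have hρ : 0 < 2 * (4 : ℝ) ^ (-((K + 1 : ℕ) : ℤ)) := by positivity
  rw [← two_mul_four_zpow_rpow_neg_half, ← ENNReal.ofReal_rpow_of_pos hρ]
  exact le_avgOp1_of_lt_ballAvg1 (by norm_num) hρ
    (rpow_neg_half_lt_ballAvg1_cantorF hp hpx hxp)

lemma volume_le_avgOp1_cantorF {k j : ℕ} (hk : 1 ≤ k) (hkj : k ≤ j) :
    ENNReal.ofReal ((2 : ℝ) ^ (-(k : ℤ))) ≤
      volume {x : ℝ |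
        ENNReal.ofReal ((2 : ℝ) ^ (-(1 : ℝ) / 2) * 2 ^ k) ≤ avgOp1 (1 / 2) (cantorF j) x} := by
  obtain ⟨K, rfl⟩ : ∃ K, k = K + 1 := ⟨k - 1, by omega⟩
  obtain ⟨m, rfl⟩ : ∃ m, j = K + 1 + m := ⟨j - (K + 1), by omega⟩
  set ε := (4 : ℝ) ^ (-((K + 1 : ℕ) : ℤ)) with hε_def
  have hsub : cantorIco K (2 * ε) \ cantorS K ⊆ {x | ENNReal.ofReal
      ((2 : ℝ) ^ (-(1 : ℝ) / 2) * 2 ^ (K + 1)) ≤ avgOp1 (1 / 2) (cantorF (K + 1 + m)) x} := by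
    rintro x ⟨hx, hxS⟩
    simp only [cantorIco, Set.mem_iUnion, Set.mem_Ico, exists_prop] at hx
    obtain ⟨p, hp, hpx, hxp⟩ := hx
    exact le_avgOp1_cantorF hp (hpx.lt_of_ne (by rintro rfl; exact hxS hp)) hxp
  have hε : ε * ((2 : ℝ) ^ (K + 1) * 2 ^ (K + 1)) = 1 := by
    rw [hε_def, four_zpow_neg, inv_mul_cancel₀ (by positivity)]
  calc ENNReal.ofReal ((2 : ℝ) ^ (-((K + 1 : ℕ) : ℤ)))
      = volume (cantorIco K (2 * ε) \ cantorS K) := by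
        rw [measure_sdiff_null ((cantorS_finite K).measure_zero _),
          volume_cantorIco (by positivity) ?_, zpow_neg, zpow_natCast]
        · congr 1
          field_simp
          linear_combination -hε
        · rw [show (4 : ℝ) ^ K = 2 ^ K * 2 ^ K by rw [← mul_pow]; norm_num]
          linarith [show (2 : ℝ) ^ K * 2 ^ K * (2 * ε) = 1 / 2 by linear_combination hε / 2]
    _ ≤ _ := measure_mono hsub

lemma min_mul_rpow_sub_one_le {q a l : ℝ} (ha : 0 < a) (hal : a ≤ l) (hl : l ≤ 2 * a) :
    min 1 (2 ^ (q - 1)) * a ^ (q - 1) ≤ l ^ (q - 1) := by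
  rcases le_total 0 (q - 1) with hq | hq
  · calc min 1 (2 ^ (q - 1)) * a ^ (q - 1) ≤ 1 * a ^ (q - 1) := by gcongr; exact min_le_left _ _
      _ ≤ l ^ (q - 1) := by rw [one_mul]; exact Real.rpow_le_rpow ha.le hal hq
  · calc min 1 (2 ^ (q - 1)) * a ^ (q - 1) ≤ 2 ^ (q - 1) * a ^ (q - 1) := by
          gcongr; exact min_le_right _ _
      _ = (2 * a) ^ (q - 1) := (Real.mul_rpow zero_le_two ha.le).symm
      _ ≤ l ^ (q - 1) := Real.rpow_le_rpow_of_nonpos (ha.trans_le hal) hl hq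

noncomputable def lorentzIntegrand (q : ℝ) (h : ℝ → ℝ≥0∞) (l : ℝ) : ℝ≥0∞ :=
  volume {x | ENNReal.ofReal l < h x} ^ q * ENNReal.ofReal (l ^ (q - 1))

lemma L1qNorm_eq (q : ℝ) (h : ℝ → ℝ≥0∞) :
    L1qNorm q h = (∫⁻ l in Set.Ioi 0, lorentzIntegrand q h l) ^ (1 / q) := rfl

lemma le_setLIntegral_Ioo_lorentzIntegrand {h : ℝ → ℝ≥0∞} {q a t : ℝ} (hq : 0 < q) (ha : 0 < a)
    (ht : 0 ≤ t) (hlev : ENNReal.ofReal t ≤ volume {x | ENNReal.ofReal a ≤ h x}) :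
    ENNReal.ofReal ((t * (a / 2)) ^ q * min 1 (2 ^ (q - 1))) ≤
      ∫⁻ l in Set.Ioo (a / 2) a, lorentzIntegrand q h l := by
  have ha2 : 0 < a / 2 := half_pos ha
  have hpt : ∀ l ∈ Set.Ioo (a / 2) a, ENNReal.ofReal (t ^ q * (min 1 (2 ^ (q - 1)) *
      (a / 2) ^ (q - 1))) ≤ lorentzIntegrand q h l := by
    rintro l ⟨hl1, hl2⟩
    have hlev' : ENNReal.ofReal t ≤ volume {x | ENNReal.ofReal l < h x} :=
      hlev.trans (measure_mono fun x hx =>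
        lt_of_lt_of_le ((ENNReal.ofReal_lt_ofReal_iff ha).2 hl2) hx)
    rw [lorentzIntegrand, ENNReal.ofReal_mul (by positivity),
      ← ENNReal.ofReal_rpow_of_nonneg ht hq.le]
    gcongr
    exact min_mul_rpow_sub_one_le ha2 hl1.le (by linarith)
  refine le_trans (le_of_eq ?_) (setLIntegral_mono' measurableSet_Ioo hpt)
  rw [setLIntegral_const, Real.volume_Ioo, ← ENNReal.ofReal_mul (by positivity),
    show a - a / 2 = a / 2 by ring, Real.mul_rpow ht ha2.le, Real.rpow_sub_one ha2.ne']
  congr 1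
  field_simp

lemma natCast_mul_le_lintegral_lorentzIntegrand {h : ℝ → ℝ≥0∞} {q c : ℝ} (hq : 0 < q) (hc : 0 < c)
    (j : ℕ) (hlev : ∀ k ∈ Finset.Icc 1 j,
      ENNReal.ofReal ((2 : ℝ) ^ (-(k : ℤ))) ≤ volume {x | ENNReal.ofReal (c * 2 ^ k) ≤ h x}) :
    j * ENNReal.ofReal ((c / 2) ^ q * min 1 (2 ^ (q - 1))) ≤
      ∫⁻ l in Set.Ioi 0, lorentzIntegrand q h l := by
  set I : ℕ → Set ℝ := fun k => Set.Ioo (c * 2 ^ k / 2) (c * 2 ^ k)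
  have hdisj : Pairwise (Function.onFun Disjoint I) := by
    refine (pairwise_disjoint_on I).2 fun k n hkn => Set.disjoint_left.2 fun l hk hn => ?_
    have : (2 : ℝ) ^ k * 2 ≤ 2 ^ n := by
      rw [← pow_succ]; exact pow_le_pow_right₀ one_le_two hkn
    nlinarith [hk.2, hn.1]
  have hpiece : ∀ k ∈ Finset.Icc 1 j, ENNReal.ofReal ((c / 2) ^ q * min 1 (2 ^ (q - 1))) ≤
      ∫⁻ l in I k, lorentzIntegrand q h l := by
    intro k hk
    convert le_setLIntegral_Ioo_lorentzIntegrand hq (by positivity) (by positivity) (hlev k hk)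
      using 4
    rw [zpow_neg, zpow_natCast]
    field_simp
  calc (j : ℝ≥0∞) * ENNReal.ofReal ((c / 2) ^ q * min 1 (2 ^ (q - 1)))
      = ∑ _k ∈ Finset.Icc 1 j, ENNReal.ofReal ((c / 2) ^ q * min 1 (2 ^ (q - 1))) := by
        simp
    _ ≤ ∑ k ∈ Finset.Icc 1 j, ∫⁻ l in I k, lorentzIntegrand q h l :=
        Finset.sum_le_sum hpiece
    _ = ∫⁻ l in ⋃ k ∈ Finset.Icc 1 j, I k, lorentzIntegrand q h l :=
        (lintegral_biUnion_finset (hdisj.set_pairwise _) (fun _ _ => measurableSet_Ioo) _).symm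
    _ ≤ _ := lintegral_mono_set (Set.iUnion₂_subset fun k _ l hl =>
        lt_trans (by positivity) hl.1)

lemma iSup_rpow_eq_top_of_natCast_mul_le {I : ℕ → ℝ≥0∞} {C : ℝ≥0∞} {r : ℝ} (hC : C ≠ 0)
    (hr : 0 < r) (hI : ∀ j : ℕ, j * C ≤ I j) : ⨆ j, I j ^ r = ⊤ := by
  have htop : ⨆ j, I j = ⊤ := top_le_iff.1 <| by
    rw [← ENNReal.top_mul hC, ← ENNReal.iSup_natCast, ENNReal.iSup_mul]
    exact iSup_mono hI
  have := (ENNReal.orderIsoRpow r hr).map_iSup I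
  rw [ENNReal.orderIsoRpow_apply, htop, ENNReal.top_rpow_of_pos hr] at this
  simpa using this.symm

theorem stmt17 :
    (∀ j : ℕ, (∫⁻ x, cantorF j x) ≤ ENNReal.ofReal ((2 : ℝ) ^ ((3 : ℝ) / 2))) ∧
    (∀ k j : ℕ, 1 ≤ k → k ≤ j →
      ENNReal.ofReal ((2 : ℝ) ^ (-(k : ℤ))) ≤
        volume {x : ℝ |
          ENNReal.ofReal ((2 : ℝ) ^ (-(1 : ℝ) / 2) * 2 ^ k) ≤ avgOp1 (1 / 2) (cantorF j) x}) ∧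
    (∀ q : ℝ, 0 < q → (⨆ j : ℕ, L1qNorm q (avgOp1 (1 / 2) (cantorF j))) = ⊤) := by
  refine ⟨fun j => (lintegral_cantorF j).le, fun _ _ => volume_le_avgOp1_cantorF, fun q hq => ?_⟩
  simp only [L1qNorm_eq]
  have hc : (0 : ℝ) < 2 ^ (-(1 : ℝ) / 2) := by positivity
  refine iSup_rpow_eq_top_of_natCast_mul_le (ENNReal.ofReal_pos.2 (by positivity)).ne'
    (one_div_pos.2 hq) fun j => natCast_mul_le_lintegral_lorentzIntegrand hq hc j fun k hk => ?_
  obtain ⟨hk1, hkj⟩ := Finset.mem_Icc.1 hk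
  exact volume_le_avgOp1_cantorF hk1 hkj
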